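/- Let D be a principal ideal domain, p ∈ D prime, t ≥ 2, B ∈ M_n(D), and let ν_t, ν_{t-1} be (p^t)- and (p^{t-1})-minimal polynomials of B respectively. If deg(ν_t) = deg(ν_{t-1}), then ν_t − ν_{t-1} ∈ p·N_{(p^{t-2})}(B) and (ν_t) + p·N_{(p^{t-2})}(B) = (ν_{t-1}) + p·N_{(p^{t-2})}(B). -/

import Mathlib

/-!
Both `ν_t` and `ν_{t-1}` lie in `N_(p^(t-1))(B)`, are monic and have the same degree, so their
difference has smaller degree than the `(p^(t-1))`-minimal polynomial `ν_{t-1}`. An element of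
`N_(p^s)(B)` outside `p·D[X]` has degree at least that of a `(p^s)`-minimal polynomial, hence
`ν_t - ν_{t-1} = p·g`, and cancelling `p` puts `g` in `N_(p^(t-2))(B)`.
-/

open Polynomial Matrix

theorem exists_mul_add_mul_of_sub_eq {R : Type*} [CommRing R] {I : Ideal R} {π x y g f : R}
    (hg : g ∈ I) (hxy : x - y = π * g) :
    (∃ a h, h ∈ I ∧ f = a * x + π * h) → ∃ a h, h ∈ I ∧ f = a * y + π * h := by
  rintro ⟨a, h, hh, rfl⟩
  exact ⟨a, h + a * g, add_mem hh (Ideal.mul_mem_left _ _ hg), by linear_combination a * hxy⟩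

theorem exists_mul_add_mul_iff_of_sub_eq {R : Type*} [CommRing R] {I : Ideal R} {π x y g : R}
    (hg : g ∈ I) (hxy : x - y = π * g) (f : R) :
    (∃ a h, h ∈ I ∧ f = a * x + π * h) ↔ ∃ a h, h ∈ I ∧ f = a * y + π * h :=
  ⟨exists_mul_add_mul_of_sub_eq hg hxy,
    exists_mul_add_mul_of_sub_eq (neg_mem hg) (by linear_combination -hxy)⟩

namespace Matrix

variable {ι R : Type*} [Fintype ι] [DecidableEq ι] [CommRing R]

/-- `N_(a)(B)`: the kernel of `f ↦ f(B) mod a`. -/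
noncomputable def nullIdeal (B : Matrix ι ι R) (a : R) : Ideal R[X] :=
  RingHom.ker ((Ideal.Quotient.mk (Ideal.span {a})).mapMatrix.comp (aeval B).toRingHom)

variable {B : Matrix ι ι R} {a b c : R} {f : R[X]}

theorem mem_nullIdeal : f ∈ nullIdeal B a ↔ ∀ i j, a ∣ aeval B f i j := by
  simp [nullIdeal, RingHom.mem_ker, ← Matrix.ext_iff, Ideal.Quotient.eq_zero_iff_mem,
    Ideal.mem_span_singleton]

theorem nullIdeal_le_of_dvd (h : b ∣ a) : nullIdeal B a ≤ nullIdeal B b :=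
  fun _ hf => mem_nullIdeal.2 fun i j => h.trans (mem_nullIdeal.1 hf i j)

theorem C_mul_mem_nullIdeal (h : a ∣ c) (f : R[X]) : C c * f ∈ nullIdeal B a :=
  mem_nullIdeal.2 fun i j => by
    simpa [← smul_eq_C_mul] using h.mul_right _

theorem C_mul_mem_nullIdeal_mul (h : b ∣ c) (hf : f ∈ nullIdeal B a) :
    C c * f ∈ nullIdeal B (b * a) :=
  mem_nullIdeal.2 fun i j => by
    simpa only [← smul_eq_C_mul, map_smul, smul_apply, smul_eq_mul] using
      mul_dvd_mul h (mem_nullIdeal.1 hf i j)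

theorem C_mul_mem_nullIdeal_mul_iff [IsDomain R] (hc : c ≠ 0) :
    C c * f ∈ nullIdeal B (c * a) ↔ f ∈ nullIdeal B a := by
  simp only [mem_nullIdeal, ← smul_eq_C_mul, map_smul, smul_apply, smul_eq_mul,
    mul_dvd_mul_iff_left hc]

variable (B a) in
theorem exists_monic_mem_nullIdeal : ∃ f : R[X], f.Monic ∧ f ∈ nullIdeal B a :=
  ⟨B.charpoly, B.charpoly_monic, mem_nullIdeal.2 fun i j => by simp [aeval_self_charpoly]⟩

variable (B a) in
/-- The degree of an `(a)`-minimal polynomial of `B`; the set is nonempty by Cayley–Hamilton. -/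
noncomputable def minMonicDegree : ℕ :=
  sInf {d | ∃ f : R[X], f.Monic ∧ f ∈ nullIdeal B a ∧ f.natDegree = d}

variable (B a) in
theorem exists_monic_mem_nullIdeal_natDegree_eq :
    ∃ f : R[X], f.Monic ∧ f ∈ nullIdeal B a ∧ f.natDegree = minMonicDegree B a :=
  Nat.sInf_mem (s := {d | ∃ f : R[X], f.Monic ∧ f ∈ nullIdeal B a ∧ f.natDegree = d}) <|
    (exists_monic_mem_nullIdeal B a).elim fun f hf => ⟨_, f, hf.1, hf.2, rfl⟩

theorem minMonicDegree_le (hf : f.Monic) (hfB : f ∈ nullIdeal B a) :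
    minMonicDegree B a ≤ f.natDegree :=
  Nat.sInf_le ⟨f, hf, hfB, rfl⟩

/-- A polynomial of `N_(a)(B)` whose leading coefficient is a unit modulo `a` can be made monic
modulo `a` without changing its degree. -/
theorem minMonicDegree_le_of_isCoprime (h : IsCoprime a f.leadingCoeff)
    (hf : f ∈ nullIdeal B a) : minMonicDegree B a ≤ f.natDegree := by
  obtain ⟨x, y, hxy⟩ := h
  set g := C y * f + C (x * a) * X ^ f.natDegree
  have hg : g ∈ nullIdeal B a :=
    add_mem (Ideal.mul_mem_left _ _ hf) (C_mul_mem_nullIdeal (dvd_mul_left a x) _)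
  have hdeg : g.natDegree ≤ f.natDegree :=
    natDegree_add_le_of_degree_le (natDegree_C_mul_le _ _) (natDegree_C_mul_X_pow_le _ _)
  have hcoeff : g.coeff f.natDegree = 1 := by
    rw [← hxy, leadingCoeff]
    simp only [g, coeff_add, coeff_C_mul, coeff_X_pow_self, mul_one]
    ring
  exact (minMonicDegree_le (monic_of_natDegree_le_of_coeff_eq_one _ hdeg hcoeff) hg).trans hdeg

/-- Induction on `s`, then on the degree. If `p ∣ f.leadingCoeff`, subtracting
`f.leadingCoeff * X ^ k * ν` for a `(p^s)`-minimal `ν` keeps `f` in `N_(p^(s+1))(B)` and outside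
`p·R[X]` but lowers its degree. -/
theorem minMonicDegree_le_natDegree_of_not_dvd [IsBezout R] {p : R} (hp : Irreducible p) (s : ℕ)
    (hf : f ∈ nullIdeal B (p ^ s)) (hpf : ¬C p ∣ f) : minMonicDegree B (p ^ s) ≤ f.natDegree := by
  induction s generalizing f with
  | zero => exact minMonicDegree_le_of_isCoprime (pow_zero p ▸ isCoprime_one_left) hf
  | succ s ih =>
    induction hr : f.natDegree using Nat.strong_induction_on generalizing f with
    | _ r ihr =>
    subst hr
    by_cases hc : p ∣ f.leadingCoeff
    swap
    · exact minMonicDegree_le_of_isCoprime ((hp.coprime_iff_not_dvd.2 hc).pow_left) hf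
    obtain ⟨ν, hνm, hνB, hνd⟩ := exists_monic_mem_nullIdeal_natDegree_eq B (p ^ s)
    have hνf : ν.natDegree ≤ f.natDegree :=
      hνd ▸ ih (nullIdeal_le_of_dvd (pow_dvd_pow p s.le_succ) hf) hpf
    set q := ν * (C f.leadingCoeff * X ^ (f.natDegree - ν.natDegree))
    have hqB : q ∈ nullIdeal B (p ^ (s + 1)) := by
      rw [pow_succ', show q = C f.leadingCoeff * (X ^ (f.natDegree - ν.natDegree) * ν) by ring]
      exact C_mul_mem_nullIdeal_mul hc (Ideal.mul_mem_left _ _ hνB)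
    have hpq : C p ∣ q := dvd_mul_of_dvd_right (dvd_mul_of_dvd_left (map_dvd C hc) _) _
    have hpfq : ¬C p ∣ f - q := fun h => hpf (by simpa using dvd_add h hpq)
    have hf0 : f ≠ 0 := by rintro rfl; exact hpf (dvd_zero _)
    have hlt : (f - q).natDegree < f.natDegree :=
      natDegree_lt_natDegree (by rintro h; exact hpfq (h ▸ dvd_zero _))
        (div_wf_lemma ⟨(natDegree_le_iff_degree_le.1 hνf).trans_eq (degree_eq_natDegree hf0).symm,
          hf0⟩ hνm)
    exact (ihr _ hlt (sub_mem hf hqB) hpfq rfl).trans hlt.le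

end Matrix

theorem stmt9 (D : Type*) [CommRing D] [IsDomain D] [IsPrincipalIdealRing D]
    (n : ℕ) (p : D) (hp : Prime p) (B : Matrix (Fin n) (Fin n) D)
    (t : ℕ) (ht : 2 ≤ t) (νt νt1 : Polynomial D)
    (hνt : νt.Monic ∧ (∀ i j, p ^ t ∣ Polynomial.aeval B νt i j) ∧
      ∀ g : Polynomial D, g.Monic → (∀ i j, p ^ t ∣ Polynomial.aeval B g i j) →
        νt.natDegree ≤ g.natDegree)
    (hνt1 : νt1.Monic ∧ (∀ i j, p ^ (t - 1) ∣ Polynomial.aeval B νt1 i j) ∧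
      ∀ g : Polynomial D, g.Monic → (∀ i j, p ^ (t - 1) ∣ Polynomial.aeval B g i j) →
        νt1.natDegree ≤ g.natDegree)
    (hdeg : νt.natDegree = νt1.natDegree) :
    (∃ g : Polynomial D, (∀ i j, p ^ (t - 2) ∣ Polynomial.aeval B g i j) ∧
      νt - νt1 = Polynomial.C p * g) ∧
    (∀ f : Polynomial D,
      (∃ a h : Polynomial D, (∀ i j, p ^ (t - 2) ∣ Polynomial.aeval B h i j) ∧
        f = a * νt + Polynomial.C p * h) ↔
      (∃ a h : Polynomial D, (∀ i j, p ^ (t - 2) ∣ Polynomial.aeval B h i j) ∧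
        f = a * νt1 + Polynomial.C p * h)) := by
  obtain ⟨hνt_monic, hνt_mem, -⟩ := hνt
  obtain ⟨hνt1_monic, hνt1_mem, hνt1_min⟩ := hνt1
  simp only [← mem_nullIdeal] at hνt_mem hνt1_mem hνt1_min ⊢
  have hsub : νt - νt1 ∈ nullIdeal B (p ^ (t - 1)) :=
    sub_mem (nullIdeal_le_of_dvd (pow_dvd_pow p (by omega)) hνt_mem) hνt1_mem
  obtain ⟨g, hg⟩ : C p ∣ νt - νt1 := by
    by_contra hpd
    have hne : νt - νt1 ≠ 0 := by rintro h; exact hpd (h ▸ dvd_zero _)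
    have hlt : (νt - νt1).natDegree < νt.natDegree := natDegree_lt_natDegree hne <|
      degree_sub_lt_left (by rw [degree_eq_natDegree hνt_monic.ne_zero,
        degree_eq_natDegree hνt1_monic.ne_zero, hdeg]) hνt_monic.ne_zero
        (by rw [hνt_monic.leadingCoeff, hνt1_monic.leadingCoeff])
    obtain ⟨ν, hνm, hνB, hνd⟩ := exists_monic_mem_nullIdeal_natDegree_eq B (p ^ (t - 1))
    have := minMonicDegree_le_natDegree_of_not_dvd hp.irreducible (t - 1) hsub hpd
    have := hνt1_min ν hνm hνB
    omega
  have hpow : p ^ (t - 1) = p * p ^ (t - 2) := by rw [← pow_succ']; congr 1; omega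
  have hgB : g ∈ nullIdeal B (p ^ (t - 2)) :=
    (C_mul_mem_nullIdeal_mul_iff hp.ne_zero).1 (hpow ▸ hg ▸ hsub)
  exact ⟨⟨g, hgB, hg⟩, exists_mul_add_mul_iff_of_sub_eq hgB hg⟩
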